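/- Assume λ_p is simple (any two nonzero minimizers of Φ(u)/‖u‖^p are linearly dependent). If u_0 ≠ 0 minimizes Φ(u)/‖u‖^p and u_1 satisfies ∂Φ(u_1) ∩ J_p(u_0) ≠ ∅, then u_1 = μ_p^{−1} u_0. Consequently the unique inverse-iteration sequence started at u_0 is u_k = μ_p^{−k} u_0. -/

import Mathlib

/-
Let `v` minimize the Rayleigh quotient, `ξ ∈ ∂Φ(w) ∩ J_p(v)` and `s = μ_p⁻¹`. Differentiating the
duality inequality along the ray through `v`, and the subgradient inequality along the ray through
`w`, gives the Euler identities `ξ v = ‖v‖^p` and `ξ w = pΦ(w)`. The subgradient inequality at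
`s v` gives `s‖v‖^p ≤ ξ w`, the duality inequality gives `ξ w ≤ ‖v‖^(p-1) ‖w‖`, and minimality of
`λ_p` gives `λ_p ‖w‖^p ≤ ξ w`. Since `λ_p s^(p-1) = 1` these squeeze to `‖w‖ = s‖v‖` with equality
throughout, so `w` is a minimizer too. By simplicity `w = c v`, and `c ‖v‖^p = ξ w = s ‖v‖^p`
pins `c = s`. Positive multiples of minimizers are minimizers, so the iteration follows by
induction.
-/

open Filter Set MeasureTheory Topology
open scoped ENNReal NNReal

noncomputable section

variable {X : Type*} [NormedAddCommGroup X] [NormedSpace ℝ X] [CompleteSpace X]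

/-- Subdifferential of an `EReal`-valued functional `Φ` at `u`. -/
def ERealSubdiff (Φ : X → EReal) (u : X) : Set (X →L[ℝ] ℝ) :=
  {ξ | ∀ w : X, Φ u + ((ξ (w - u) : ℝ) : EReal) ≤ Φ w}

/-- The duality map `J_p`: the subdifferential of `‖·‖^p / p` at `u`. -/
def Jdual (p : ℝ) (u : X) : Set (X →L[ℝ] ℝ) :=
  {ξ | ∀ w : X, ‖u‖ ^ p / p + ξ (w - u) ≤ ‖w‖ ^ p / p}

/-- Convexity for an `EReal`-valued functional. -/
def IsConvexE (Φ : X → EReal) : Prop :=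
  ∀ u v : X, ∀ a b : ℝ, 0 ≤ a → 0 ≤ b → a + b = 1 →
    Φ (a • u + b • v) ≤ (a : EReal) * Φ u + (b : EReal) * Φ v

/-- Strict convexity on the domain `{Φ < ∞}`. -/
def IsStrictConvexOnDom (Φ : X → EReal) : Prop :=
  ∀ u v : X, Φ u ≠ ⊤ → Φ v ≠ ⊤ → u ≠ v → ∀ a b : ℝ, 0 < a → 0 < b → a + b = 1 →
    Φ (a • u + b • v) < (a : EReal) * Φ u + (b : EReal) * Φ v

/-- Positive homogeneity of degree `p`. -/
def IsHomog (Φ : X → EReal) (p : ℝ) : Prop :=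
  ∀ t : ℝ, 0 ≤ t → ∀ u : X, Φ (t • u) = ((t ^ p : ℝ) : EReal) * Φ u

/-- The set of Rayleigh quotients `p Φ(u)/‖u‖^p` over nonzero `u` in the domain. -/
def RayleighSet (Φ : X → EReal) (p : ℝ) : Set ℝ :=
  {r | ∃ u : X, u ≠ 0 ∧ Φ u ≠ ⊤ ∧ r = p * (Φ u).toReal / ‖u‖ ^ p}

/-- Simplicity of the least Rayleigh quotient `lam`. -/
def IsSimple (Φ : X → EReal) (p lam : ℝ) : Prop :=
  ∀ u v : X, u ≠ 0 → v ≠ 0 → Φ u ≠ ⊤ → Φ v ≠ ⊤ →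
    lam = p * (Φ u).toReal / ‖u‖ ^ p → lam = p * (Φ v).toReal / ‖v‖ ^ p →
    ∃ c : ℝ, v = c • u

/-- `P_w(u)`: best approximations of `u` from the ray `{β w : β ≥ 0}`. -/
def ProjRay (w u : X) : Set X :=
  {x | ∃ α : ℝ, 0 ≤ α ∧ x = α • w ∧ ∀ β : ℝ, 0 ≤ β → ‖u - α • w‖ ≤ ‖u - β • w‖}

/-- `α_w(u) := inf {α > 0 : α w ∈ P_w(u)}`. -/
def alphaRay (w u : X) : ℝ :=
  sInf {α : ℝ | 0 < α ∧ α • w ∈ ProjRay w u}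

/-- Local absolute continuity of a path on `[0, ∞)`. -/
def LocAC {E : Type*} [NormedAddCommGroup E] (v : ℝ → E) : Prop :=
  ∀ T : ℝ, 0 < T → ∃ h : ℝ → ℝ, IntegrableOn h (Icc 0 T) ∧
    ∀ s t : ℝ, 0 ≤ s → s ≤ t → t ≤ T → ‖v t - v s‖ ≤ ∫ τ in Icc s t, h τ

/-- `m` is the metric derivative of `v` (a.e. on `(0,∞)`). -/
def HasMetricDeriv {E : Type*} [NormedAddCommGroup E] (v : ℝ → E) (m : ℝ → ℝ) : Prop :=
  ∀ᵐ t ∂(volume.restrict (Ioi (0:ℝ))),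
    Tendsto (fun h : ℝ => ‖v (t + h) - v t‖ / |h|) (𝓝[≠] 0) (𝓝 (m t))

/-- Local slope `|∂Φ|(u) = limsup_{z → 0} (Φ(u) − Φ(u+z))⁺ / ‖z‖`, valued in `[0,∞]`. -/
def localSlope (Φ : X → EReal) (u : X) : ℝ≥0∞ :=
  Filter.limsup (fun z : X => ENNReal.ofReal ((Φ u - Φ (u + z)).toReal / ‖z‖)) (𝓝[≠] (0 : X))

/-- `v` is a `p`-curve of maximal slope for `Φ`, with metric derivative `m` and with
`φ` a real-valued a.e.-differentiable representative of `Φ ∘ v`; the defining inequality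
`(Φ ∘ v)' ≤ -m^p/p - |∂Φ|(v)^q/q` holds a.e. on `(0,∞)`. -/
def IsPCurve (Φ : X → EReal) (p q : ℝ) (v : ℝ → X) (m : ℝ → ℝ) (φ : ℝ → ℝ) : Prop :=
  LocAC v ∧ HasMetricDeriv v m ∧ (∀ t : ℝ, 0 ≤ t → (φ t : EReal) = Φ (v t)) ∧
  ∀ᵐ t ∂(volume.restrict (Ioi (0:ℝ))),
    ∃ d : ℝ, HasDerivAt φ d t ∧ d ≤ 0 ∧
      ENNReal.ofReal (m t ^ p / p) + localSlope Φ (v t) ^ q / ENNReal.ofReal q ≤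
        ENNReal.ofReal (-d)

theorem eq_mul_of_forall_add_sub_one_mul_le_rpow_mul {c e p : ℝ}
    (h : ∀ t : ℝ, 0 < t → c + (t - 1) * e ≤ t ^ p * c) : e = p * c := by
  set f : ℝ → ℝ := fun t => t ^ p * c - (c + (t - 1) * e)
  have hf : HasDerivAt f (p * 1 ^ (p - 1) * c - 1 * e) 1 :=
    ((Real.hasDerivAt_rpow_const (Or.inl one_ne_zero)).mul_const c).sub
      ((((hasDerivAt_id 1).sub_const 1).mul_const e).const_add c)
  have hmin : IsLocalMin f 1 := by
    filter_upwards [Ioi_mem_nhds one_pos] with t ht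
    simp only [f, Real.one_rpow, sub_self, zero_mul, add_zero, one_mul]
    linarith [h t ht]
  have := hmin.hasDerivAt_eq_zero hf
  rw [Real.one_rpow] at this
  linarith

theorem eq_mul_and_eq_mul_rpow_of_le_of_le {p lam s a b P : ℝ} (hp : 1 < p) (hs : 0 < s)
    (ha : 0 < a) (hb : 0 < b) (hlam : lam * s ^ (p - 1) = 1)
    (hlow : s * a ^ p ≤ P) (hup : P ≤ a ^ (p - 1) * b) (hray : lam * b ^ p ≤ P) :
    b = s * a ∧ P = s * a ^ p := by
  have ha_rpow : a ^ p = a ^ (p - 1) * a := by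
    rw [Real.rpow_sub_one ha.ne', div_mul_cancel₀ _ ha.ne']
  have hb_rpow : b ^ p = b ^ (p - 1) * b := by
    rw [Real.rpow_sub_one hb.ne', div_mul_cancel₀ _ hb.ne']
  have ha1 : 0 < a ^ (p - 1) := Real.rpow_pos_of_pos ha _
  have hs1 : 0 < s ^ (p - 1) := Real.rpow_pos_of_pos hs _
  have hge : s * a ≤ b := by
    rw [ha_rpow] at hlow
    nlinarith
  have hle : b ≤ s * a := by
    rw [← Real.rpow_le_rpow_iff hb.le (by positivity) (by linarith : (0 : ℝ) < p - 1),
      Real.mul_rpow hs.le ha.le]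
    rw [hb_rpow] at hray
    have hlam_b : lam * b ^ (p - 1) ≤ a ^ (p - 1) := by nlinarith
    calc b ^ (p - 1) = s ^ (p - 1) * (lam * b ^ (p - 1)) := by
          linear_combination (-b ^ (p - 1)) * hlam
      _ ≤ s ^ (p - 1) * a ^ (p - 1) := mul_le_mul_of_nonneg_left hlam_b hs1.le
  have hb_eq : b = s * a := le_antisymm hle hge
  refine ⟨hb_eq, le_antisymm ?_ hlow⟩
  calc P ≤ a ^ (p - 1) * b := hup
    _ = s * a ^ p := by rw [hb_eq, ha_rpow]; ring

def IsRayleighMinimizer (Φ : X → EReal) (p lam : ℝ) (u : X) : Prop :=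
  u ≠ 0 ∧ Φ u ≠ ⊤ ∧ lam = p * (Φ u).toReal / ‖u‖ ^ p

section

omit [CompleteSpace X]

variable {Φ : X → EReal} {p lam : ℝ} {ξ : X →L[ℝ] ℝ} {u w : X}

theorem apply_self_of_mem_Jdual (hp : p ≠ 0) (hξ : ξ ∈ Jdual p u) : ξ u = ‖u‖ ^ p := by
  have h : ξ u = p * (‖u‖ ^ p / p) :=
    eq_mul_of_forall_add_sub_one_mul_le_rpow_mul fun t ht => by
      have := hξ (t • u)
      rw [map_sub, map_smul, smul_eq_mul, norm_smul, Real.norm_of_nonneg ht.le,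
        Real.mul_rpow ht.le (norm_nonneg u), mul_div_assoc] at this
      linarith
  rw [h, mul_div_cancel₀ _ hp]

theorem apply_le_of_mem_Jdual (hp : p ≠ 0) (hu : u ≠ 0) (hξ : ξ ∈ Jdual p u) (w : X) :
    ξ w ≤ ‖u‖ ^ (p - 1) * ‖w‖ := by
  rcases eq_or_ne w 0 with rfl | hw
  · simp
  have hu' : 0 < ‖u‖ := norm_pos_iff.2 hu
  have hw' : 0 < ‖w‖ := norm_pos_iff.2 hw
  have h := hξ ((‖u‖ / ‖w‖) • w)
  rw [map_sub, map_smul, smul_eq_mul, apply_self_of_mem_Jdual hp hξ, norm_smul,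
    Real.norm_of_nonneg (by positivity), div_mul_cancel₀ _ hw'.ne'] at h
  rw [Real.rpow_sub_one hu'.ne', div_mul_eq_mul_div, le_div_iff₀ hu']
  have h' : ‖u‖ / ‖w‖ * ξ w ≤ ‖u‖ ^ p := by linarith
  rw [div_mul_eq_mul_div, div_le_iff₀ hw'] at h'
  linarith

theorem ne_top_of_mem_ERealSubdiff (hξ : ξ ∈ ERealSubdiff Φ u) (hw : Φ w ≠ ⊤) : Φ u ≠ ⊤ := by
  intro hu
  have h := hξ w
  rw [hu, EReal.top_add_coe, top_le_iff] at h
  exact hw h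

theorem add_apply_sub_le_of_mem_ERealSubdiff {a b : ℝ} (hξ : ξ ∈ ERealSubdiff Φ u)
    (hu : Φ u = a) (hw : Φ w = b) : a + ξ (w - u) ≤ b := by
  have h := hξ w
  rw [hu, hw] at h
  exact_mod_cast h

theorem apply_self_of_mem_ERealSubdiff (hhom : IsHomog Φ p) {a : ℝ} (hξ : ξ ∈ ERealSubdiff Φ u)
    (hu : Φ u = a) : ξ u = p * a :=
  eq_mul_of_forall_add_sub_one_mul_le_rpow_mul fun t ht => by
    have := add_apply_sub_le_of_mem_ERealSubdiff hξ hu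
      (by rw [hhom t ht.le, hu, ← EReal.coe_mul] : Φ (t • u) = ↑(t ^ p * a))
    rw [map_sub, map_smul, smul_eq_mul] at this
    linarith

omit [NormedSpace ℝ X] in
theorem csInf_RayleighSet_le (hp : 0 ≤ p) (hnn : ∀ x : X, (0 : EReal) ≤ Φ x) (hu : u ≠ 0)
    (hfin : Φ u ≠ ⊤) : sInf (RayleighSet Φ p) ≤ p * (Φ u).toReal / ‖u‖ ^ p := by
  refine csInf_le ⟨0, ?_⟩ ⟨u, hu, hfin, rfl⟩
  rintro _ ⟨v, -, -, rfl⟩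
  exact div_nonneg (mul_nonneg hp (EReal.toReal_nonneg (hnn v))) (by positivity)

theorem IsRayleighMinimizer.smul (hhom : IsHomog Φ p) (hu : IsRayleighMinimizer Φ p lam u)
    {t : ℝ} (ht : 0 < t) : IsRayleighMinimizer Φ p lam (t • u) := by
  obtain ⟨hu0, hfin, hmin⟩ := hu
  refine ⟨smul_ne_zero ht.ne' hu0, ?_, ?_⟩
  · rw [hhom t ht.le, EReal.mul_ne_top]
    exact ⟨Or.inl (EReal.coe_ne_bot _), Or.inl (EReal.coe_nonneg.2 (by positivity)),
      Or.inl (EReal.coe_ne_top _), Or.inr hfin⟩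
  · rw [hhom t ht.le, EReal.toReal_mul, EReal.toReal_coe, norm_smul, Real.norm_of_nonneg ht.le,
      Real.mul_rpow ht.le (norm_nonneg u), hmin]
    field_simp

theorem eq_smul_of_mem_ERealSubdiff_of_mem_Jdual {s : ℝ} (hp : 1 < p)
    (hnn : ∀ x : X, (0 : EReal) ≤ Φ x) (hhom : IsHomog Φ p)
    (hlam : lam = sInf (RayleighSet Φ p)) (hsimple : IsSimple Φ p lam)
    (hs : 0 < s) (hlam_s : lam * s ^ (p - 1) = 1) (hu : IsRayleighMinimizer Φ p lam u)
    (hξw : ξ ∈ ERealSubdiff Φ w) (hξu : ξ ∈ Jdual p u) : w = s • u := by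
  obtain ⟨hu0, hufin, humin⟩ := hu
  have hp0 : 0 < p := by linarith
  have hu_rpow : 0 < ‖u‖ ^ p := Real.rpow_pos_of_pos (norm_pos_iff.2 hu0) p
  have hwfin : Φ w ≠ ⊤ := ne_top_of_mem_ERealSubdiff hξw hufin
  have hΦ_coe : ∀ x, Φ x ≠ ⊤ → Φ x = (Φ x).toReal := fun x hx =>
    (EReal.coe_toReal hx (ne_bot_of_le_ne_bot EReal.zero_ne_bot (hnn x))).symm
  have hlam_rpow : lam * s ^ p = s := by
    rw [Real.rpow_sub_one hs.ne', mul_div_assoc', div_eq_one_iff_eq hs.ne'] at hlam_s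
    exact hlam_s
  have hξu_self : ξ u = ‖u‖ ^ p := apply_self_of_mem_Jdual hp0.ne' hξu
  have hξw_self : ξ w = p * (Φ w).toReal :=
    apply_self_of_mem_ERealSubdiff hhom hξw (hΦ_coe w hwfin)
  have hlow : s * ‖u‖ ^ p ≤ ξ w := by
    have h := add_apply_sub_le_of_mem_ERealSubdiff hξw (hΦ_coe w hwfin) (w := s • u)
      (by rw [hhom s hs.le, hΦ_coe u hufin, ← EReal.coe_mul])
    rw [map_sub, map_smul, smul_eq_mul, hξu_self] at h
    have hΦu : p * (Φ u).toReal = lam * ‖u‖ ^ p := by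
      rw [humin, div_mul_cancel₀ _ hu_rpow.ne']
    have h' : ξ w + p * (s * ‖u‖ ^ p - ξ w) ≤ s * ‖u‖ ^ p :=
      calc ξ w + p * (s * ‖u‖ ^ p - ξ w) = p * ((Φ w).toReal + (s * ‖u‖ ^ p - ξ w)) := by
            rw [hξw_self]; ring
        _ ≤ p * (s ^ p * (Φ u).toReal) := mul_le_mul_of_nonneg_left h hp0.le
        _ = s * ‖u‖ ^ p := by rw [mul_left_comm, hΦu, ← mul_assoc, mul_comm (s ^ p), hlam_rpow]
    nlinarith
  have hw0 : w ≠ 0 := by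
    rintro rfl
    rw [map_zero] at hlow
    nlinarith
  have hwp : 0 < ‖w‖ ^ p := Real.rpow_pos_of_pos (norm_pos_iff.2 hw0) p
  have hray : lam * ‖w‖ ^ p ≤ ξ w := by
    rw [hξw_self, ← le_div_iff₀ hwp, hlam]
    exact csInf_RayleighSet_le hp0.le hnn hw0 hwfin
  obtain ⟨hnorm, hξw_eq⟩ := eq_mul_and_eq_mul_rpow_of_le_of_le hp hs (norm_pos_iff.2 hu0)
    (norm_pos_iff.2 hw0) hlam_s hlow (apply_le_of_mem_Jdual hp0.ne' hu0 hξu w) hray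
  have hwmin : lam = p * (Φ w).toReal / ‖w‖ ^ p := by
    rw [← hξw_self, hξw_eq, eq_div_iff hwp.ne', hnorm, Real.mul_rpow hs.le (norm_nonneg u),
      ← mul_assoc, hlam_rpow]
  obtain ⟨c, rfl⟩ := hsimple u w hu0 hw0 hufin hwfin humin hwmin
  rw [map_smul, smul_eq_mul, hξu_self] at hξw_eq
  rw [mul_right_cancel₀ hu_rpow.ne' hξw_eq]

end

theorem inverse_iteration_uniqueness_general (Φ : X → EReal) (p lam μ : ℝ) (hp : 1 < p)
    (hnn : ∀ x : X, (0 : EReal) ≤ Φ x)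
    (hhom : IsHomog Φ p)
    (hlam : lam = sInf (RayleighSet Φ p)) (hpos : 0 < lam)
    (hμ : μ = lam ^ (1 / (p - 1)))
    (hsimple : IsSimple Φ p lam)
    (u0 : X) (hu0 : u0 ≠ 0) (hu0fin : Φ u0 ≠ ⊤)
    (hmin : lam = p * (Φ u0).toReal / ‖u0‖ ^ p)
    (u1 : X) (h1 : ∃ ξ : X →L[ℝ] ℝ, ξ ∈ ERealSubdiff Φ u1 ∧ ξ ∈ Jdual p u0) :
    u1 = μ⁻¹ • u0 ∧
      ∀ u : ℕ → X, u 0 = u0 →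
        (∀ k : ℕ, ∃ ξ : X →L[ℝ] ℝ, ξ ∈ ERealSubdiff Φ (u (k + 1)) ∧ ξ ∈ Jdual p (u k)) →
        ∀ k : ℕ, u k = (μ⁻¹ ^ k : ℝ) • u0 := by
  have hμ_pos : 0 < μ := hμ ▸ Real.rpow_pos_of_pos hpos _
  have hs : 0 < μ⁻¹ := inv_pos.2 hμ_pos
  have hlam_s : lam * μ⁻¹ ^ (p - 1) = 1 := by
    rw [Real.inv_rpow hμ_pos.le, hμ, one_div, Real.rpow_inv_rpow hpos.le (by linarith),
      mul_inv_cancel₀ hpos.ne']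
  have step : ∀ {v w : X}, IsRayleighMinimizer Φ p lam v →
      (∃ ξ : X →L[ℝ] ℝ, ξ ∈ ERealSubdiff Φ w ∧ ξ ∈ Jdual p v) → w = μ⁻¹ • v :=
    fun hv ⟨_, hξw, hξv⟩ =>
      eq_smul_of_mem_ERealSubdiff_of_mem_Jdual hp hnn hhom hlam hsimple hs hlam_s hv hξw hξv
  have hu0_min : IsRayleighMinimizer Φ p lam u0 := ⟨hu0, hu0fin, hmin⟩
  refine ⟨step hu0_min h1, fun u hu_zero hu_succ k => ?_⟩
  have hu_k : u k = μ⁻¹ ^ k • u0 ∧ IsRayleighMinimizer Φ p lam (u k) := by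
    induction k with
    | zero => simpa [hu_zero] using hu0_min
    | succ k ih =>
      rw [step ih.2 (hu_succ k), ih.1, smul_smul, ← pow_succ']
      exact ⟨rfl, hu0_min.smul hhom (pow_pos hs _)⟩
  exact hu_k.1

theorem inverse_iteration_uniqueness (Φ : X → EReal) (p lam μ : ℝ) (hp : 1 < p)
    (hnn : ∀ x : X, (0 : EReal) ≤ Φ x)
    (hconv : IsConvexE Φ) (hsc : IsStrictConvexOnDom Φ)
    (hlsc : LowerSemicontinuous Φ) (hhom : IsHomog Φ p)
    (hcs : ∀ c : ℝ, IsCompact {x : X | Φ x ≤ (c : EReal)})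
    (hlam : lam = sInf (RayleighSet Φ p)) (hpos : 0 < lam)
    (hμ : μ = lam ^ (1 / (p - 1)))
    (hsimple : IsSimple Φ p lam)
    (u0 : X) (hu0 : u0 ≠ 0) (hu0fin : Φ u0 ≠ ⊤)
    (hmin : lam = p * (Φ u0).toReal / ‖u0‖ ^ p)
    (u1 : X) (h1 : ∃ ξ : X →L[ℝ] ℝ, ξ ∈ ERealSubdiff Φ u1 ∧ ξ ∈ Jdual p u0) :
    u1 = μ⁻¹ • u0 ∧
      ∀ u : ℕ → X, u 0 = u0 →
        (∀ k : ℕ, ∃ ξ : X →L[ℝ] ℝ, ξ ∈ ERealSubdiff Φ (u (k + 1)) ∧ ξ ∈ Jdual p (u k)) →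
        ∀ k : ℕ, u k = (μ⁻¹ ^ k : ℝ) • u0 :=
  inverse_iteration_uniqueness_general Φ p lam μ hp hnn hhom hlam hpos hμ hsimple u0 hu0 hu0fin hmin
    u1 h1
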